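/- arXiv:2003.05100 — 3 statements merged into one kernel-verified Lean document; each statement's English description precedes it below -/
import Mathlib

section
/- Let R be a Z/2-graded-commutative superalgebra over a commutative ring k, and let P be a Z/2-graded R-module that is finitely generated projective as an R-module. Then P is a generator of the category of R-modules if and only if P is faithful as an R-module. -/
/-!
The odd elements generate a two-sided nil ideal `I` (odd elements square to zero and anticommute,
so a product of two of them is central and squares to zero), and every element of `R` is
congruent modulo `I` to its even part, which is central; in particular `R ⧸ I` is commutative.
By the dual basis lemma the image of the trace ideal `T` in `R ⧸ I` is finitely generated and
idempotent, hence generated by an idempotent, which lifts along the nil ideal to a central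
idempotent `e` of `R`. Then `(1 - e) T ⊆ I`, so `(1 - e) • P ⊆ I • ((1 - e) • P)` and Nakayama's
lemma gives `(1 - e) • P = 0`. If `P` is faithful, `e = 1`, so `T` contains an element `t` with
`1 - t ∈ I` nilpotent, i.e. a unit.
-/

open DirectSum

lemma Ideal.le_jacobson_of_forall_isNilpotent {R : Type*} [Ring R] {I : Ideal R}
    (h : ∀ x ∈ I, IsNilpotent x) : I ≤ Ring.jacobson R := by
  intro x hx
  rw [← Ideal.jacobson_bot, Ideal.mem_jacobson_iff]
  intro y
  obtain ⟨u, hu⟩ := (h _ (I.neg_mem (I.mul_mem_left y hx))).isUnit_one_sub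
  refine ⟨↑u⁻¹, ?_⟩
  rw [sub_neg_eq_add, add_comm] at hu
  rw [Ideal.mem_bot, mul_assoc, ← mul_add_one, ← hu, Units.inv_mul, sub_self]

namespace Module

variable {R P : Type*} [Ring R] [AddCommGroup P] [Module R P]

variable (R P) in
def traceIdeal : Ideal R := Submodule.span R {x | ∃ (f : P →ₗ[R] R) (p : P), f p = x}

lemma apply_mem_traceIdeal (f : P →ₗ[R] R) (p : P) : f p ∈ traceIdeal R P :=
  Submodule.subset_span ⟨f, p, rfl⟩

lemma mul_eq_zero_of_mem_annihilator_of_mem_traceIdeal {a t : R} (ha : a ∈ annihilator R P)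
    (ht : t ∈ traceIdeal R P) : a * t = 0 := by
  induction ht using Submodule.span_induction generalizing a with
  | mem x hx =>
    obtain ⟨f, p, rfl⟩ := hx
    rw [← smul_eq_mul, ← map_smul, mem_annihilator.mp ha, map_zero]
  | zero => exact mul_zero a
  | add x y _ _ hx hy => rw [mul_add, hx ha, hy ha, add_zero]
  | smul s x _ hx => rw [smul_eq_mul, ← mul_assoc, hx (Ideal.mul_mem_right s _ ha)]

lemma eq_zero_of_forall_smul_eq_zero_of_traceIdeal_eq_top (h : traceIdeal R P = ⊤) (r : R)
    (hr : ∀ m : P, r • m = 0) : r = 0 := by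
  simpa using mul_eq_zero_of_mem_annihilator_of_mem_traceIdeal (mem_annihilator.mpr hr)
    (h ▸ Submodule.mem_top : (1 : R) ∈ traceIdeal R P)

lemma Projective.exists_dual_basis [Module.Finite R P] [Projective R P] :
    ∃ (n : ℕ) (v : Fin n → P) (φ : Fin n → P →ₗ[R] R), ∀ p, ∑ i, φ i p • v i = p := by
  classical
  obtain ⟨n, f, g, -, -, hfg⟩ := Finite.exists_comp_eq_id_of_projective R P
  refine ⟨n, fun i => f (Pi.single i 1), fun i => (LinearMap.proj i).comp g, fun p => ?_⟩
  conv_rhs => rw [← LinearMap.id_apply (R := R) p, ← hfg, LinearMap.comp_apply,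
    LinearMap.pi_apply_eq_sum_univ f]
  refine Finset.sum_congr rfl fun i _ => congrArg (g p i • f ·) ?_
  ext j
  simp [Pi.single_apply, eq_comm]

lemma apply_eq_sum_mul_of_dual_basis {n : ℕ} {v : Fin n → P} {φ : Fin n → P →ₗ[R] R}
    (hφv : ∀ p, ∑ i, φ i p • v i = p) (g : P →ₗ[R] R) (p : P) :
    g p = ∑ i, φ i p * g (v i) := by
  conv_lhs => rw [← hφv p]
  simp only [map_sum, map_smul, smul_eq_mul]

variable [Module.Finite R P] [Projective R P]

lemma traceIdeal_le_mul_self : traceIdeal R P ≤ traceIdeal R P * traceIdeal R P := by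
  obtain ⟨n, v, φ, hφv⟩ := Projective.exists_dual_basis (R := R) (P := P)
  refine Submodule.span_le.mpr ?_
  rintro _ ⟨g, p, rfl⟩
  rw [apply_eq_sum_mul_of_dual_basis hφv g p]
  exact sum_mem fun i _ => Ideal.mul_mem_mul (apply_mem_traceIdeal _ _) (apply_mem_traceIdeal _ _)

lemma smul_eq_zero_of_mul_mem_of_isIdempotentElem {I : Ideal R} (hI : ∀ x ∈ I, IsNilpotent x)
    {e : R} (he_center : e ∈ Subring.center R) (he : IsIdempotentElem e)
    (heT : ∀ t ∈ traceIdeal R P, e * t ∈ I) (p : P) : e • p = 0 := by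
  obtain ⟨n, v, φ, hφv⟩ := Projective.exists_dual_basis (R := R) (P := P)
  have expand : ∀ x : P, e • x = ∑ i, (e * φ i x) • e • v i := by
    intro x
    conv_lhs => rw [← hφv x]
    rw [Finset.smul_sum]
    refine Finset.sum_congr rfl fun i _ => ?_
    rw [smul_smul, smul_smul, mul_assoc, Subring.mem_center_iff.mp he_center, ← mul_assoc, he.eq]
  set N := Submodule.span R (Set.range fun i => e • v i)
  have hN : N ≤ I • N := by
    refine Submodule.span_le.mpr ?_
    rintro _ ⟨i, rfl⟩
    change e • v i ∈ I • N
    rw [expand]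
    exact sum_mem fun j _ => Submodule.smul_mem_smul (heT _ (apply_mem_traceIdeal _ _))
      (Submodule.subset_span ⟨j, rfl⟩)
  have hN_bot : N = ⊥ := Submodule.FG.eq_bot_of_le_jacobson_smul
    (Submodule.fg_span (Set.finite_range _))
    (hN.trans (Submodule.smul_mono_left (Ideal.le_jacobson_of_forall_isNilpotent hI)))
  have hv : ∀ i, e • v i = 0 := fun i =>
    (Submodule.mem_bot R).mp (hN_bot ▸ Submodule.subset_span ⟨i, rfl⟩)
  simp only [expand p, hv, smul_zero, Finset.sum_const_zero]

section CommQuotient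

variable {Q : Type*} [CommRing Q] (π : R →+* Q)

lemma isIdempotentElem_map_traceIdeal : IsIdempotentElem ((traceIdeal R P).map π) :=
  Ideal.mul_le_right.antisymm <| by
    rw [← Ideal.map_mul]; exact Ideal.map_mono traceIdeal_le_mul_self

/-- `g p = ∑ⱼ ∑ᵢ φⱼ(p) φᵢ(vⱼ) g(vᵢ)`, so in the commutative ring `Q` the images of the finitely
many `φᵢ(vⱼ)` generate. -/
lemma fg_map_traceIdeal : ((traceIdeal R P).map π).FG := by
  obtain ⟨n, v, φ, hφv⟩ := Projective.exists_dual_basis (R := R) (P := P)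
  suffices (traceIdeal R P).map π =
      Ideal.span (Set.range fun ij : Fin n × Fin n => π (φ ij.1 (v ij.2))) from
    this ▸ Submodule.fg_span (Set.finite_range _)
  refine le_antisymm ?_ ?_
  · rw [Ideal.map_le_iff_le_comap]
    refine Submodule.span_le.mpr ?_
    rintro _ ⟨g, p, rfl⟩
    rw [SetLike.mem_coe, Ideal.mem_comap, apply_eq_sum_mul_of_dual_basis hφv g p, map_sum]
    refine sum_mem fun j _ => ?_
    rw [apply_eq_sum_mul_of_dual_basis hφv g (v j), Finset.mul_sum, map_sum]
    refine sum_mem fun i _ => ?_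
    rw [map_mul, map_mul, mul_left_comm]
    exact Ideal.mul_mem_right _ _ (Ideal.subset_span ⟨(i, j), rfl⟩)
  · rw [Ideal.span_le]
    rintro _ ⟨ij, rfl⟩
    exact Ideal.mem_map_of_mem π (apply_mem_traceIdeal _ _)

theorem traceIdeal_eq_top_of_ker_isNilpotent (hnil : ∀ x ∈ RingHom.ker π, IsNilpotent x)
    (hcenter : Function.Surjective (π.comp (Subring.center R).subtype))
    (hfaith : ∀ r : R, (∀ m : P, r • m = 0) → r = 0) : traceIdeal R P = ⊤ := by
  obtain ⟨ē, hē, hTē⟩ := (Ideal.isIdempotentElem_iff_of_fg _ (fg_map_traceIdeal (P := P) π)).mp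
    (isIdempotentElem_map_traceIdeal (P := P) π)
  obtain ⟨e, he, rfl⟩ := exists_isIdempotentElem_eq_of_ker_isNilpotent _
    (fun x hx => (IsNilpotent.map_iff Subtype.val_injective).mp (hnil _ hx)) ē (hcenter ē) hē
  have h1eT : ∀ t ∈ traceIdeal R P, (1 - (e : R)) * t ∈ RingHom.ker π := by
    intro t ht
    obtain ⟨q, hq⟩ := Ideal.mem_span_singleton'.mp (hTē ▸ Ideal.mem_map_of_mem π ht)
    change q * π e = π t at hq
    have hπe : π e * π e = π e := hē
    rw [RingHom.mem_ker, map_mul, ← hq, map_sub, map_one]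
    linear_combination (-q) * hπe
  have he1 : (e : R) = 1 := by
    refine (sub_eq_zero.mp (hfaith _ fun p => ?_)).symm
    exact smul_eq_zero_of_mul_mem_of_isIdempotentElem hnil
      (sub_mem (one_mem _) e.2) (he.map (Subring.center R).subtype).one_sub h1eT p
  have h1 : (1 : Q) ∈ (traceIdeal R P).map π := by
    rw [hTē]; simp [he1]
  obtain ⟨t, ht, hπt⟩ := (Ideal.mem_map_iff_of_surjective π (hcenter.of_comp (f := π))).mp h1
  exact Ideal.eq_top_of_isUnit_mem _ ht
    (by simpa using (hnil (1 - t) (by simp [hπt])).isUnit_one_sub)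

end CommQuotient

theorem traceIdeal_eq_top_of_mem_isNilpotent (I : Ideal R) [I.IsTwoSided]
    (hnil : ∀ x ∈ I, IsNilpotent x) (hcenter : ∀ r : R, ∃ c ∈ Subring.center R, r - c ∈ I)
    (hfaith : ∀ r : R, (∀ m : P, r • m = 0) → r = 0) : traceIdeal R P = ⊤ := by
  have hmk : ∀ r : R, ∃ c ∈ Subring.center R, Ideal.Quotient.mk I r = Ideal.Quotient.mk I c :=
    fun r => (hcenter r).imp fun _ => And.imp_right Ideal.Quotient.eq.mpr
  let _ : CommRing (R ⧸ I) :=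
    { Ideal.Quotient.ring I with
      mul_comm := fun a b => by
        obtain ⟨x, rfl⟩ := Ideal.Quotient.mk_surjective a
        obtain ⟨y, rfl⟩ := Ideal.Quotient.mk_surjective b
        obtain ⟨c, hc, hxc⟩ := hmk x
        rw [hxc, ← map_mul, ← map_mul, Subring.mem_center_iff.mp hc] }
  refine traceIdeal_eq_top_of_ker_isNilpotent (Ideal.Quotient.mk I)
    (fun x hx => hnil x (by rwa [Ideal.mk_ker] at hx)) (fun q => ?_) hfaith
  obtain ⟨x, rfl⟩ := Ideal.Quotient.mk_surjective q
  obtain ⟨c, hc, hxc⟩ := hmk x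
  exact ⟨⟨c, hc⟩, hxc.symm⟩

end Module

lemma mul_eq_neg_mul_of_mul_self_eq_zero {R : Type*} [Ring R] {u v : R} (hu : u * u = 0)
    (hv : v * v = 0) (huv : (u + v) * (u + v) = 0) : u * v = -(v * u) := by
  rw [mul_add, add_mul, add_mul, hu, hv, zero_add, add_zero] at huv
  exact eq_neg_of_add_eq_zero_right huv

lemma isNilpotent_mul_of_mul_self_eq_zero {R : Type*} [Ring R] {u v : R} (hu : u * u = 0)
    (hv : v * v = 0) (huv : (u + v) * (u + v) = 0) : IsNilpotent (u * v) :=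
  ⟨2, by
    rw [sq, mul_assoc, ← mul_assoc v,
      mul_eq_neg_mul_of_mul_self_eq_zero hv hu (by rwa [add_comm])]
    simp [← mul_assoc, hu]⟩

section Superalgebra

variable {k R : Type*} [CommRing k] [Ring R] [Algebra k R]
  (𝒜 : ZMod 2 → Submodule k R) [GradedAlgebra 𝒜]

lemma decompose_zero_add_decompose_one (r : R) :
    (decompose 𝒜 r 0 : R) + decompose 𝒜 r 1 = r :=
  calc _ = ∑ i, (decompose 𝒜 r i : R) := (Fin.sum_univ_two _).symm
    _ = r := by
      conv_rhs => rw [← (decompose 𝒜).symm_apply_apply r, ← sum_univ_of (decompose 𝒜 r)]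
      simp

def oddIdeal : Ideal R := Ideal.span (𝒜 1)

variable {𝒜}

lemma isTwoSided_oddIdeal (hcentral : ∀ x ∈ 𝒜 0, ∀ r : R, x * r = r * x)
    (hodd : ∀ x ∈ 𝒜 1, x * x = 0) : (oddIdeal 𝒜).IsTwoSided := by
  refine ⟨fun r hx => ?_⟩
  induction hx using Submodule.span_induction with
  | mem t ht =>
    have hr := decompose_zero_add_decompose_one 𝒜 r
    set r₀ : R := (decompose 𝒜 r 0 : R)
    set r₁ : R := (decompose 𝒜 r 1 : R)
    have : t * r = r₀ • t - r₁ • t := by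
      rw [← hr, mul_add, ← hcentral r₀ (SetLike.coe_mem _) t,
        mul_eq_neg_mul_of_mul_self_eq_zero (hodd t ht) (hodd _ (SetLike.coe_mem _))
          (hodd _ (add_mem ht (SetLike.coe_mem _))), smul_eq_mul, smul_eq_mul,
        sub_eq_add_neg]
    rw [this]
    exact sub_mem (Ideal.mul_mem_left _ _ (Ideal.subset_span ht))
      (Ideal.mul_mem_left _ _ (Ideal.subset_span ht))
  | zero => rw [zero_mul]; exact zero_mem _
  | add x y _ _ hx hy => rw [add_mul]; exact add_mem hx hy
  | smul s x _ hx => rw [smul_mul_assoc]; exact Submodule.smul_mem _ s hx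

lemma isNilpotent_of_mem_oddIdeal (hcentral : ∀ x ∈ 𝒜 0, ∀ r : R, x * r = r * x)
    (hodd : ∀ x ∈ 𝒜 1, x * x = 0) {x : R} (hx : x ∈ oddIdeal 𝒜) : IsNilpotent x := by
  have hsplit : ∃ y ∈ 𝒜 1, ∃ z ∈ 𝒜 0, IsNilpotent z ∧ y + z = x := by
    induction hx using Submodule.span_induction with
    | mem y hy => exact ⟨y, hy, 0, zero_mem _, .zero, add_zero y⟩
    | zero => exact ⟨0, zero_mem _, 0, zero_mem _, .zero, add_zero 0⟩
    | add x x' _ _ hx hx' =>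
      obtain ⟨y, hy, z, hz, hzn, rfl⟩ := hx
      obtain ⟨y', hy', z', hz', hzn', rfl⟩ := hx'
      exact ⟨y + y', add_mem hy hy', z + z', add_mem hz hz',
        Commute.isNilpotent_add (hcentral z hz z') hzn hzn', by abel⟩
    | smul r x _ hx =>
      obtain ⟨y, hy, z, hz, hzn, rfl⟩ := hx
      have hr := decompose_zero_add_decompose_one 𝒜 r
      set r₀ : R := (decompose 𝒜 r 0 : R)
      set r₁ : R := (decompose 𝒜 r 1 : R)
      have hr₀ : r₀ ∈ 𝒜 0 := SetLike.coe_mem _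
      have hr₁ : r₁ ∈ 𝒜 1 := SetLike.coe_mem _
      have h₁₁ : r₁ * y ∈ 𝒜 0 := SetLike.mul_mem_graded hr₁ hy
      refine ⟨r₀ * y + r₁ * z, add_mem ?_ ?_, r₁ * y + r₀ * z, add_mem h₁₁ ?_, ?_, ?_⟩
      · simpa using SetLike.mul_mem_graded hr₀ hy
      · simpa using SetLike.mul_mem_graded hr₁ hz
      · simpa using SetLike.mul_mem_graded hr₀ hz
      · exact Commute.isNilpotent_add (hcentral _ h₁₁ _)
          (isNilpotent_mul_of_mul_self_eq_zero (hodd r₁ hr₁) (hodd y hy) (hodd _ (add_mem hr₁ hy)))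
          (Commute.isNilpotent_mul_left (hcentral r₀ hr₀ z) hzn)
      · rw [← hr, smul_eq_mul]; noncomm_ring
  obtain ⟨y, hy, z, hz, hzn, rfl⟩ := hsplit
  exact Commute.isNilpotent_add (hcentral z hz y).symm ⟨2, by rw [sq, hodd y hy]⟩ hzn

lemma exists_mem_center_sub_mem_oddIdeal (hcentral : ∀ x ∈ 𝒜 0, ∀ r : R, x * r = r * x)
    (r : R) : ∃ c ∈ Subring.center R, r - c ∈ oddIdeal 𝒜 :=
  ⟨(decompose 𝒜 r 0 : R),
    Subring.mem_center_iff.mpr fun g => (hcentral _ (SetLike.coe_mem _) g).symm, by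
    rw [← eq_sub_of_add_eq' (decompose_zero_add_decompose_one 𝒜 r)]
    exact Ideal.subset_span (SetLike.coe_mem _)⟩

end Superalgebra

theorem stmt1_general {k R : Type*} [CommRing k] [Ring R] [Algebra k R]
    (𝒜 : ZMod 2 → Submodule k R) [GradedAlgebra 𝒜]
    (hcentral : ∀ x ∈ 𝒜 0, ∀ r : R, x * r = r * x)
    (hodd : ∀ x ∈ 𝒜 1, x * x = 0)
    {P : Type*} [AddCommGroup P] [Module R P]
    [Module.Finite R P] [Module.Projective R P] :
    (Submodule.span R {x : R | ∃ (f : P →ₗ[R] R) (p : P), f p = x} = ⊤)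
      ↔ (∀ r : R, (∀ m : P, r • m = 0) → r = 0) := by
  have := isTwoSided_oddIdeal hcentral hodd
  exact ⟨Module.eq_zero_of_forall_smul_eq_zero_of_traceIdeal_eq_top,
    Module.traceIdeal_eq_top_of_mem_isNilpotent (oddIdeal 𝒜)
      (fun _ => isNilpotent_of_mem_oddIdeal hcentral hodd)
      (exists_mem_center_sub_mem_oddIdeal hcentral)⟩

/-- Let `R` be a `ℤ/2`-graded-commutative superalgebra over a commutative ring `k`
(grading `𝒜` with `R₀` central and odd squares zero), and let `P` be a
`ℤ/2`-graded `R`-module (grading `ℳ`, an internal direct sum compatible with the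
`R`-action) that is finitely generated projective as an `R`-module.  Then `P` is
a generator of the category of `R`-modules (i.e. its trace ideal is all of `R`)
if and only if `P` is faithful as an `R`-module. -/
theorem stmt1 {k R : Type*} [CommRing k] [Ring R] [Algebra k R]
    (𝒜 : ZMod 2 → Submodule k R) [GradedAlgebra 𝒜]
    (hcentral : ∀ x ∈ 𝒜 0, ∀ r : R, x * r = r * x)
    (hodd : ∀ x ∈ 𝒜 1, x * x = 0)
    {P : Type*} [AddCommGroup P] [Module R P]
    (ℳ : ZMod 2 → AddSubgroup P)
    (hinternal : DirectSum.IsInternal ℳ)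
    (hsmul : ∀ (i j : ZMod 2), ∀ r ∈ 𝒜 i, ∀ m ∈ ℳ j, r • m ∈ ℳ (i + j))
    [Module.Finite R P] [Module.Projective R P] :
    (Submodule.span R {x : R | ∃ (f : P →ₗ[R] R) (p : P), f p = x} = ⊤)
      ↔ (∀ r : R, (∀ m : P, r • m = 0) → r = 0) :=
  stmt1_general 𝒜 hcentral hodd
end

section
/- Let A be a Hopf superalgebra over a field k and let := A ⋊ kZ₂ be its bosonization (Radford biproduct with the group algebra of Z₂ = ⟨σ⟩ acting by parity). Then there is a natural k-linear isomorphism between the space of right A-supercomodule maps A → k and the space of right Â-comodule maps Â → k, given by ψ ↦ ψ ⊗ ω where ω(σ^i) = δ_{i,0}. -/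
open TensorProduct

/-- A (not necessarily super-commutative) Hopf superalgebra over `k`:
a `ℤ/2`-graded `k`-module (the grading being given by the pair of projections
`p 0`, `p 1`), equipped with a graded multiplication `mul`, unit `one`, graded
comultiplication `comul`, counit `counit` and antipode `antipode`, where the
compatibility of `comul` with `mul` involves the super-sign
`(a ⊗ b)(c ⊗ d) = (−1)^{|b||c|} ac ⊗ bd`. -/
structure HopfSuperalgebra (k : Type*) [CommRing k] (A : Type*)
    [AddCommGroup A] [Module k A] where
  p : ZMod 2 → A →ₗ[k] A
  p_sum : p 0 + p 1 = LinearMap.id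
  p_orth : ∀ i j : ZMod 2, i ≠ j → (p i) ∘ₗ (p j) = 0
  mul : A →ₗ[k] A →ₗ[k] A
  one : A
  mul_assoc : ∀ a b c : A, mul (mul a b) c = mul a (mul b c)
  one_mul : ∀ a : A, mul one a = a
  mul_one : ∀ a : A, mul a one = a
  mul_grading : ∀ (i j : ZMod 2) (a b : A),
    p (i + j) (mul (p i a) (p j b)) = mul (p i a) (p j b)
  one_grading : p 0 one = one
  comul : A →ₗ[k] A ⊗[k] A
  counit : A →ₗ[k] k
  coassoc : ∀ a : A,
    (TensorProduct.assoc k A A A)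
      ((TensorProduct.map comul (LinearMap.id : A →ₗ[k] A)) (comul a)) =
    (TensorProduct.map (LinearMap.id : A →ₗ[k] A) comul) (comul a)
  counit_comul : ∀ a : A,
    (TensorProduct.lid k A)
      ((TensorProduct.map counit (LinearMap.id : A →ₗ[k] A)) (comul a)) = a
  comul_counit : ∀ a : A,
    (TensorProduct.rid k A)
      ((TensorProduct.map (LinearMap.id : A →ₗ[k] A) counit) (comul a)) = a
  comul_grading : ∀ l : ZMod 2,
    comul ∘ₗ p l = ∑ i : ZMod 2, (TensorProduct.map (p i) (p (l - i))) ∘ₗ comul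
  comul_one : comul one = one ⊗ₜ[k] one
  counit_one : counit one = 1
  counit_mul : ∀ a b : A, counit (mul a b) = counit a * counit b
  counit_grading : counit ∘ₗ p 1 = 0
  comul_mul : ∀ a b : A, comul (mul a b) =
    ∑ i : ZMod 2, ∑ j : ZMod 2, ((-1 : ℤ) ^ (i.val * j.val)) •
      (TensorProduct.homTensorHomMap (RingHom.id k) A A A A
        ((TensorProduct.map mul mul)
          ((TensorProduct.map (LinearMap.id : A →ₗ[k] A) (p i)) (comul a))))
        ((TensorProduct.map (p j) (LinearMap.id : A →ₗ[k] A)) (comul b))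
  antipode : A →ₗ[k] A
  antipode_left : ∀ a : A,
    (TensorProduct.lift mul)
      ((TensorProduct.map antipode (LinearMap.id : A →ₗ[k] A)) (comul a))
      = counit a • one
  antipode_right : ∀ a : A,
    (TensorProduct.lift mul)
      ((TensorProduct.map (LinearMap.id : A →ₗ[k] A) antipode) (comul a))
      = counit a • one

namespace HopfSuperalgebra

variable {k A : Type*} [CommRing k] [AddCommGroup A] [Module k A]

/-- Super-commutativity: for homogeneous `a`, `b` one has
`ab = (−1)^{|a||b|} ba` (which, in the presence of the grading axioms, is
equivalent to `R₀` being central and odd squares vanishing). -/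
def IsSupercommutative (H : HopfSuperalgebra k A) : Prop :=
  ∀ (i j : ZMod 2) (a b : A),
    H.mul (H.p i a) (H.p j b) =
      ((-1 : ℤ) ^ (i.val * j.val)) • H.mul (H.p j b) (H.p i a)

/-- The convolution product `ξ * η` on the dual space `A* = Hom_k(A, k)`. -/
noncomputable def conv (H : HopfSuperalgebra k A) (ξ η : A →ₗ[k] k) :
    A →ₗ[k] k :=
  (LinearMap.mul' k k) ∘ₗ (TensorProduct.map ξ η) ∘ₗ H.comul

/-- `φ` is a left integral: `ξ φ = ξ(1) φ` for all `ξ ∈ A*`. -/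
def IsLeftIntegral (H : HopfSuperalgebra k A) (φ : A →ₗ[k] k) : Prop :=
  ∀ ξ : A →ₗ[k] k, H.conv ξ φ = ξ H.one • φ

/-- `φ` is a right integral: `φ ξ = ξ(1) φ` for all `ξ ∈ A*`. -/
def IsRightIntegral (H : HopfSuperalgebra k A) (φ : A →ₗ[k] k) : Prop :=
  ∀ ξ : A →ₗ[k] k, H.conv φ ξ = ξ H.one • φ

end HopfSuperalgebra

namespace HopfSuperalgebra

variable {k A : Type*} [CommRing k] [AddCommGroup A] [Module k A]

/-- The bosonization `Â = A ⊗ kZ₂` is modelled on `A × A`, the first component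
being the coefficient of `σ⁰ = e` and the second that of `σ`.  `slot i` embeds
`A` as `A ⊗ σ^i`. -/
def slot (k : Type*) [CommRing k] (A : Type*) [AddCommGroup A] [Module k A]
    (i : ZMod 2) : A →ₗ[k] A × A :=
  if i = 0 then LinearMap.inl k A A else LinearMap.inr k A A

/-- The smash-coproduct comultiplication of the bosonization `Â = A ⊗ kZ₂`,
`Δ(a ⊗ σ^i) = Σ (a₍₁₎ ⊗ σ^{i+|a₍₂₎|}) ⊗ (a₍₂₎ ⊗ σ^i)`. -/
noncomputable def hatComul (H : HopfSuperalgebra k A) :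
    (A × A) →ₗ[k] (A × A) ⊗[k] (A × A) :=
  (∑ j : ZMod 2,
      (TensorProduct.map (slot k A ((0 : ZMod 2) + j))
        ((slot k A 0) ∘ₗ H.p j)) ∘ₗ H.comul) ∘ₗ LinearMap.fst k A A
  + (∑ j : ZMod 2,
      (TensorProduct.map (slot k A ((1 : ZMod 2) + j))
        ((slot k A 1) ∘ₗ H.p j)) ∘ₗ H.comul) ∘ₗ LinearMap.snd k A A

/-- The unit `1 ⊗ e` of the bosonization. -/
def hatOne (H : HopfSuperalgebra k A) : A × A := (H.one, 0)

/-- `φ : Â → k` is a map of right `Â`-comodules (where `k` is the trivial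
comodule), i.e. `Σ φ(x₍₁₎) x₍₂₎ = φ(x) 1` for all `x ∈ Â`. -/
def IsHatComoduleMap (H : HopfSuperalgebra k A) (φ : A × A →ₗ[k] k) : Prop :=
  ∀ x : A × A,
    (TensorProduct.lid k (A × A))
      ((TensorProduct.map φ (LinearMap.id : A × A →ₗ[k] A × A))
        (H.hatComul x)) = φ x • H.hatOne

/-- `ψ : A → k` is a map of right `A`-supercomodules (`k` trivial), i.e.
`Σ ψ(a₍₁₎) a₍₂₎ = ψ(a) 1` for all `a ∈ A`. -/
def IsComoduleMap (H : HopfSuperalgebra k A) (ψ : A →ₗ[k] k) : Prop :=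
  ∀ a : A,
    (TensorProduct.lid k A)
      ((TensorProduct.map ψ (LinearMap.id : A →ₗ[k] A)) (H.comul a))
      = ψ a • H.one

end HopfSuperalgebra

open HopfSuperalgebra

/-!
Pair the smash coproduct of `Â` with `φ : Â → k` and write `ξ₀ = φ(- ⊗ e)`, `ξ₁ = φ(- ⊗ σ)`.
The `e`-component of the comodule condition at `a ⊗ σ` reads `0 = φ(a ⊗ σ) 1`, and applying the
counit shows `ξ₁ = 0`. For `φ = ψ ⊗ ω` the two components of the condition then become the even and
the odd part of `Σ ψ(a₍₁₎) a₍₂₎ = ψ(a) 1`, which together are equivalent to it.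
-/

lemma ZMod.sum_univ_two {M : Type*} [AddCommMonoid M] (f : ZMod 2 → M) :
    ∑ i, f i = f 0 + f 1 :=
  Fin.sum_univ_two f

namespace HopfSuperalgebra

variable {k A : Type*} [CommRing k] [AddCommGroup A] [Module k A]

lemma slot_zero : slot k A 0 = LinearMap.inl k A A := if_pos rfl

lemma slot_one : slot k A 1 = LinearMap.inr k A A := if_neg (by decide)

lemma p_zero_add_p_one (H : HopfSuperalgebra k A) (a : A) : H.p 0 a + H.p 1 a = a :=
  LinearMap.congr_fun H.p_sum a

lemma p_one_one (H : HopfSuperalgebra k A) : H.p 1 H.one = 0 := by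
  rw [← H.one_grading]
  exact LinearMap.congr_fun (H.p_orth 1 0 (by decide)) H.one

noncomputable def rightHit (H : HopfSuperalgebra k A) (ξ : A →ₗ[k] k) : A →ₗ[k] A :=
  (TensorProduct.lid k A).toLinearMap ∘ₗ TensorProduct.map ξ LinearMap.id ∘ₗ H.comul

@[simp]
lemma rightHit_zero (H : HopfSuperalgebra k A) : H.rightHit 0 = 0 := by
  simp [rightHit, TensorProduct.map_zero_left]

lemma isComoduleMap_iff_rightHit (H : HopfSuperalgebra k A) (ψ : A →ₗ[k] k) :
    H.IsComoduleMap ψ ↔ ∀ a, H.rightHit ψ a = ψ a • H.one :=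
  Iff.rfl

lemma lid_map_map_comp {M N P Q : Type*} [AddCommGroup M] [Module k M] [AddCommGroup N]
    [Module k N] [AddCommGroup P] [Module k P] [AddCommGroup Q] [Module k Q]
    (φ : P →ₗ[k] k) (f : M →ₗ[k] P) (g : N →ₗ[k] Q) (t : M ⊗[k] N) :
    TensorProduct.lid k Q (TensorProduct.map φ LinearMap.id (TensorProduct.map f g t)) =
      g (TensorProduct.lid k N (TensorProduct.map (φ ∘ₗ f) LinearMap.id t)) := by
  induction t using TensorProduct.induction_on with
  | zero => simp
  | tmul m n => simp
  | add x y hx hy => simp [hx, hy]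

lemma lid_map_hatComul (H : HopfSuperalgebra k A) (φ : A × A →ₗ[k] k) (x : A × A) :
    TensorProduct.lid k (A × A) (TensorProduct.map φ LinearMap.id (H.hatComul x)) =
      (H.p 0 (H.rightHit (φ ∘ₗ LinearMap.inl k A A) x.1) +
          H.p 1 (H.rightHit (φ ∘ₗ LinearMap.inr k A A) x.1),
        H.p 0 (H.rightHit (φ ∘ₗ LinearMap.inr k A A) x.2) +
          H.p 1 (H.rightHit (φ ∘ₗ LinearMap.inl k A A) x.2)) := by
  have h11 : (1 : ZMod 2) + 1 = 0 := rfl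
  simp only [hatComul, LinearMap.add_apply, LinearMap.comp_apply,
    ZMod.sum_univ_two, zero_add, add_zero, h11, slot_zero, slot_one, map_add, lid_map_map_comp,
    rightHit, LinearMap.inl_apply, LinearMap.inr_apply, LinearMap.fst_apply,
    LinearMap.snd_apply, Prod.mk_add_mk]
  rfl

lemma isHatComoduleMap_iff (H : HopfSuperalgebra k A) (φ : A × A →ₗ[k] k) :
    H.IsHatComoduleMap φ ↔ ∀ x : A × A,
      H.p 0 (H.rightHit (φ ∘ₗ LinearMap.inl k A A) x.1) +
          H.p 1 (H.rightHit (φ ∘ₗ LinearMap.inr k A A) x.1) = φ x • H.one ∧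
        H.p 0 (H.rightHit (φ ∘ₗ LinearMap.inr k A A) x.2) +
          H.p 1 (H.rightHit (φ ∘ₗ LinearMap.inl k A A) x.2) = 0 := by
  simp only [IsHatComoduleMap, lid_map_hatComul, hatOne, Prod.smul_mk, smul_zero, Prod.ext_iff]

lemma isHatComoduleMap_comp_fst_iff (H : HopfSuperalgebra k A) (ψ : A →ₗ[k] k) :
    H.IsHatComoduleMap (ψ ∘ₗ LinearMap.fst k A A) ↔ H.IsComoduleMap ψ := by
  have h_inl : ψ ∘ₗ LinearMap.fst k A A ∘ₗ LinearMap.inl k A A = ψ := by ext; simp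
  have h_inr : ψ ∘ₗ LinearMap.fst k A A ∘ₗ LinearMap.inr k A A = 0 := by ext; simp
  simp only [isHatComoduleMap_iff, LinearMap.comp_assoc, h_inl, h_inr, rightHit_zero,
    LinearMap.zero_apply, map_zero, add_zero, zero_add, LinearMap.comp_apply,
    LinearMap.fst_apply, isComoduleMap_iff_rightHit]
  constructor
  · intro h a
    rw [← H.p_zero_add_p_one (H.rightHit ψ a), (h (a, 0)).1, (h (0, a)).2, add_zero]
  · intro h x
    rw [h, h, map_smul, map_smul, H.one_grading, H.p_one_one, smul_zero]
    exact ⟨rfl, rfl⟩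

lemma IsHatComoduleMap.apply_inr_eq_zero {H : HopfSuperalgebra k A} {φ : A × A →ₗ[k] k}
    (hφ : H.IsHatComoduleMap φ) (a : A) : φ (0, a) = 0 := by
  have h := congrArg H.counit ((H.isHatComoduleMap_iff φ).mp hφ (0, a)).1
  simpa [H.counit_one] using h.symm

lemma IsHatComoduleMap.eq_comp_fst {H : HopfSuperalgebra k A} {φ : A × A →ₗ[k] k}
    (hφ : H.IsHatComoduleMap φ) :
    φ = (φ ∘ₗ LinearMap.inl k A A) ∘ₗ LinearMap.fst k A A := by
  ext x
  · rfl
  · simp [hφ.apply_inr_eq_zero]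

end HopfSuperalgebra

/-- Let `A` be a Hopf superalgebra over a field `k` and `Â = A ⋊ kZ₂` its
bosonization (modelled on `A × A`, with the smash coproduct `hatComul`).
There is a natural `k`-linear isomorphism between the space of right
`A`-supercomodule maps `A → k` and the space of right `Â`-comodule maps
`Â → k`, given by `ψ ↦ ψ ⊗ ω` where `ω(σ^i) = δ_{i,0}`; in the model `A × A`
this assignment is `ψ ↦ ψ ∘ fst`. -/
theorem stmt6 {k A : Type*} [Field k] [AddCommGroup A] [Module k A]
    (H : HopfSuperalgebra k A) :
    ∃ e : {ψ : A →ₗ[k] k // H.IsComoduleMap ψ} ≃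
          {φ : A × A →ₗ[k] k // H.IsHatComoduleMap φ},
      ∀ ψ : {ψ : A →ₗ[k] k // H.IsComoduleMap ψ},
        ((e ψ : {φ : A × A →ₗ[k] k // H.IsHatComoduleMap φ}) : A × A →ₗ[k] k)
          = (ψ : A →ₗ[k] k) ∘ₗ LinearMap.fst k A A := by
  refine ⟨{
    toFun := fun ψ => ⟨ψ.1 ∘ₗ LinearMap.fst k A A, (H.isHatComoduleMap_comp_fst_iff ψ.1).mpr ψ.2⟩
    invFun := fun φ => ⟨φ.1 ∘ₗ LinearMap.inl k A A,
      (H.isHatComoduleMap_comp_fst_iff _).mp (φ.2.eq_comp_fst ▸ φ.2)⟩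
    left_inv := fun ψ => Subtype.ext (by ext; simp)
    right_inv := fun φ => Subtype.ext φ.2.eq_comp_fst.symm }, fun ψ => rfl⟩
end

section
/- Let p be a prime, q = p^r, k a field of characteristic p, C a nonzero commutative k-algebra, τ ∈ C, A = k[T]/(T^q), B = C[T]/(T^q − τ) with coaction ρ(T) = 1 ⊗ T + T ⊗ 1. Then the Galois map β : B ⊗_C B → B ⊗ A, β(a ⊗ b) = a·ρ(b), is bijective; i.e., B/C is an A-Hopf–Galois extension. -/
open Polynomial TensorProduct

/-- The Hopf algebra `A = k[T]/(T^q)` of the infinitesimal group scheme `α_q`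
(the Hopf structure, with `T` primitive, is encoded through the coaction `ρ`
below). -/
abbrev AlphaQ (k : Type*) [CommRing k] (q : ℕ) : Type _ :=
  Polynomial k ⧸ Ideal.span ({Polynomial.X ^ q} : Set (Polynomial k))

/-- The class of `T` in `k[T]/(T^q)`. -/
noncomputable def AlphaQ.T (k : Type*) [CommRing k] (q : ℕ) : AlphaQ k q :=
  Ideal.Quotient.mk _ Polynomial.X

/-- `B = C[T]/(T^q − τ)`. -/
abbrev Btau (C : Type*) [CommRing C] (q : ℕ) (τ : C) : Type _ :=
  Polynomial C ⧸ Ideal.span ({Polynomial.X ^ q - Polynomial.C τ} : Set (Polynomial C))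

/-- The class of `T` in `C[T]/(T^q − τ)`. -/
noncomputable def Btau.T (C : Type*) [CommRing C] (q : ℕ) (τ : C) : Btau C q τ :=
  Ideal.Quotient.mk _ Polynomial.X

/-!
Since `β` is well defined on `B ⊗_C B`, the coaction `ρ` is `C`-linear, so `β` is the
`C`-algebra map `a ⊗ b ↦ (a ⊗ 1) ρ(b)`. In characteristic `p` the Frobenius gives
`(1 ⊗ T - T ⊗ 1)^q = 1 ⊗ τ - τ ⊗ 1 = 0` in `B ⊗_C B`, so `b ⊗ T^i ↦ (b ⊗ 1)(1 ⊗ T - T ⊗ 1)^i`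
defines a `C`-algebra map `B ⊗ A → B ⊗_C B`. Both composites with `β` fix the generators
`T ⊗ 1`, `1 ⊗ T`, hence are the identity.
-/

namespace AlphaQ

variable {k : Type*} [CommRing k] {q : ℕ} {S : Type*} [Semiring S] [Algebra k S]

theorem algHom_ext {f g : AlphaQ k q →ₐ[k] S} (h : f (AlphaQ.T k q) = g (AlphaQ.T k q)) :
    f = g :=
  Ideal.Quotient.algHom_ext k (Polynomial.algHom_ext h)

noncomputable def lift (x : S) (hx : x ^ q = 0) : AlphaQ k q →ₐ[k] S :=
  Ideal.Quotient.liftₐ _ (aeval x) fun a ha => by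
    obtain ⟨g, rfl⟩ := Ideal.mem_span_singleton'.mp ha
    simp [hx]

@[simp]
theorem lift_T (x : S) (hx : x ^ q = 0) : lift x hx (AlphaQ.T k q) = x :=
  aeval_X x

end AlphaQ

namespace Btau

variable {C : Type*} [CommRing C] {q : ℕ} {τ : C}

theorem T_pow : Btau.T C q τ ^ q = algebraMap C (Btau C q τ) τ := by
  rw [Btau.T, ← map_pow, ← Ideal.Quotient.mk_algebraMap, Ideal.Quotient.eq]
  exact Ideal.subset_span rfl

theorem adjoin_T_eq_top : Algebra.adjoin C {Btau.T C q τ} = ⊤ :=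
  AdjoinRoot.adjoinRoot_eq_top

end Btau

theorem sub_pow_char_pow_of_algebra (k : Type*) {S : Type*} [Field k] [CommRing S] [Algebra k S]
    (p : ℕ) [Fact p.Prime] [CharP k p] (x y : S) (r : ℕ) :
    (x - y) ^ p ^ r = x ^ p ^ r - y ^ p ^ r := by
  nontriviality S
  have := charP_of_injective_algebraMap (algebraMap k S).injective p
  exact sub_pow_char_pow x y r

section GaloisMap

variable {k C B A : Type*} [CommRing k] [CommRing C] [CommRing B] [CommRing A]
  [Algebra C B] [Algebra k B] [Algebra k A]

theorem map_algebraMap_of_galoisMap (ρ : B →ₐ[k] B ⊗[k] A) (β : B ⊗[C] B →+ B ⊗[k] A)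
    (hβ : ∀ a b : B, β (a ⊗ₜ[C] b) = (a ⊗ₜ[k] 1) * ρ b) (c : C) :
    ρ (algebraMap C B c) = algebraMap C B c ⊗ₜ[k] 1 := by
  have h := congrArg β (show algebraMap C B c ⊗ₜ[C] (1 : B) = 1 ⊗ₜ[C] algebraMap C B c by
    rw [Algebra.algebraMap_eq_smul_one, smul_tmul])
  rwa [hβ, hβ, map_one, mul_one, ← Algebra.TensorProduct.one_def, one_mul, eq_comm] at h

variable [Algebra k C] [IsScalarTower k C B]

noncomputable def galoisMap (ρ : B →ₐ[C] B ⊗[k] A) : B ⊗[C] B →ₐ[C] B ⊗[k] A :=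
  Algebra.TensorProduct.lift Algebra.TensorProduct.includeLeft ρ fun _ _ => Commute.all _ _

theorem coe_eq_galoisMap (ρ : B →ₐ[C] B ⊗[k] A) (β : B ⊗[C] B →+ B ⊗[k] A)
    (hβ : ∀ a b : B, β (a ⊗ₜ[C] b) = (a ⊗ₜ[k] 1) * ρ b) : ⇑β = galoisMap ρ := by
  ext x
  induction x using TensorProduct.induction_on with
  | zero => simp
  | tmul a b => simp [galoisMap, hβ]
  | add x y hx hy => simp [hx, hy]

end GaloisMap

theorem one_tmul_sub_tmul_one_pow_eq_zero (k : Type*) [Field k] (p : ℕ) [Fact p.Prime]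
    [CharP k p] (r : ℕ) {C B : Type*} [CommRing C] [Algebra k C] [CommRing B] [Algebra C B]
    [Algebra k B] [IsScalarTower k C B] {t : B} {τ : C} (ht : t ^ p ^ r = algebraMap C B τ) :
    ((1 : B) ⊗ₜ[C] t - t ⊗ₜ[C] (1 : B)) ^ p ^ r = 0 := by
  rw [sub_pow_char_pow_of_algebra k p, Algebra.TensorProduct.tmul_pow,
    Algebra.TensorProduct.tmul_pow, one_pow, ht, Algebra.algebraMap_eq_smul_one,
    ← smul_tmul, sub_self]

section PurelyInseparable

variable (k : Type*) [Field k] (p : ℕ) [Fact p.Prime] [CharP k p] (r : ℕ)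
  {C B : Type*} [CommRing C] [Algebra k C] [CommRing B] [Algebra C B] [Algebra k B]
  [IsScalarTower k C B] {t : B} {τ : C}

noncomputable def galoisInv (ht : t ^ p ^ r = algebraMap C B τ) :
    B ⊗[k] AlphaQ k (p ^ r) →ₐ[C] B ⊗[C] B :=
  Algebra.TensorProduct.lift Algebra.TensorProduct.includeLeft
    (AlphaQ.lift _ (one_tmul_sub_tmul_one_pow_eq_zero k p r ht)) fun _ _ => Commute.all _ _

theorem galoisMap_bijective (ht : t ^ p ^ r = algebraMap C B τ)
    (hgen : Algebra.adjoin C {t} = ⊤) (ρ : B →ₐ[C] B ⊗[k] AlphaQ k (p ^ r))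
    (hρ : ρ t = t ⊗ₜ[k] 1 + 1 ⊗ₜ[k] AlphaQ.T k (p ^ r)) :
    Function.Bijective (galoisMap ρ) := by
  refine (AlgEquiv.ofAlgHom (galoisMap ρ) (galoisInv k p r ht) ?_ ?_).bijective
  · apply Algebra.TensorProduct.ext
    · apply AlgHom.ext_of_adjoin_eq_top hgen
      simp [galoisMap, galoisInv]
    · apply AlphaQ.algHom_ext
      simp [galoisMap, galoisInv, hρ, ← Algebra.TensorProduct.one_def]
  · apply Algebra.TensorProduct.ext
    · apply AlgHom.ext_of_adjoin_eq_top hgen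
      simp [galoisMap, galoisInv]
    · apply AlgHom.ext_of_adjoin_eq_top hgen
      simp [galoisMap, galoisInv, hρ, ← Algebra.TensorProduct.one_def]

end PurelyInseparable

theorem stmt18_general {k : Type*} [Field k] (p : ℕ) [Fact p.Prime] [CharP k p]
    (r : ℕ) (q : ℕ) (hq : q = p ^ r)
    (C : Type*) [CommRing C] [Algebra k C] (τ : C)
    (ρ : Btau C q τ →ₐ[k] (Btau C q τ) ⊗[k] (AlphaQ k q))
    (hρT : ρ (Btau.T C q τ) = (Btau.T C q τ) ⊗ₜ[k] 1 + 1 ⊗ₜ[k] (AlphaQ.T k q))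
    (β : (Btau C q τ) ⊗[C] (Btau C q τ) →+ (Btau C q τ) ⊗[k] (AlphaQ k q))
    (hβ : ∀ a b : Btau C q τ, β (a ⊗ₜ[C] b) = (a ⊗ₜ[k] (1 : AlphaQ k q)) * ρ b) :
    Function.Bijective β := by
  subst hq
  let ρC : Btau C (p ^ r) τ →ₐ[C] Btau C (p ^ r) τ ⊗[k] AlphaQ k (p ^ r) :=
    { ρ with
      commutes' := fun c => (map_algebraMap_of_galoisMap ρ β hβ c).trans
        (Algebra.TensorProduct.algebraMap_apply _).symm }
  rw [coe_eq_galoisMap ρC β hβ]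
  exact galoisMap_bijective k p r Btau.T_pow Btau.adjoin_T_eq_top ρC hρT

/-- Let `p` be a prime, `q = p^r`, `k` a field of characteristic `p`, `C` a
nonzero commutative `k`-algebra, `τ ∈ C`, `A = k[T]/(T^q)`, and
`B = C[T]/(T^q − τ)` with the coaction `ρ : B → B ⊗ A` determined by
`ρ(T) = T ⊗ 1 + 1 ⊗ T` and `ρ(c) = c ⊗ 1` for `c ∈ C`.  Then the Galois map
`β : B ⊗_C B → B ⊗ A`, `β(a ⊗ b) = (a ⊗ 1)·ρ(b)` (encoded as an additive map
pinned on pure tensors), is bijective; i.e. `B/C` is an `A`-Hopf–Galois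
extension. -/
theorem stmt18 {k : Type*} [Field k] (p : ℕ) [Fact p.Prime] [CharP k p]
    (r : ℕ) (hr : 0 < r) (q : ℕ) (hq : q = p ^ r)
    (C : Type*) [CommRing C] [Algebra k C] [Nontrivial C] (τ : C)
    (ρ : Btau C q τ →ₐ[k] (Btau C q τ) ⊗[k] (AlphaQ k q))
    (hρC : ∀ c : C, ρ (algebraMap C (Btau C q τ) c)
        = (algebraMap C (Btau C q τ) c) ⊗ₜ[k] 1)
    (hρT : ρ (Btau.T C q τ) = (Btau.T C q τ) ⊗ₜ[k] 1 + 1 ⊗ₜ[k] (AlphaQ.T k q))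
    (β : (Btau C q τ) ⊗[C] (Btau C q τ) →+ (Btau C q τ) ⊗[k] (AlphaQ k q))
    (hβ : ∀ a b : Btau C q τ, β (a ⊗ₜ[C] b) = (a ⊗ₜ[k] (1 : AlphaQ k q)) * ρ b) :
    Function.Bijective β :=
  stmt18_general p r q hq C τ ρ hρT β hβ
end
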